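/- arXiv:1810.04924 — 3 statements merged into one kernel-verified Lean document; each statement's English description precedes it below -/
import Mathlib

section
/- Let (U, ω) be a V-symplectic vector space with U and V of positive dimension, let U' = U ⊕ Hom(U,V) with canonical polysymplectic form ω'(u+φ,u'+φ') = φ'(u) − φ(u'), and let f : V → V' be a linear map with nontrivial kernel. Then the composite f ∘ ω' is degenerate: there exists a nonzero element of U' (namely the constant map φ_v for v ∈ ker f, v ≠ 0) annihilated by f ∘ ω'. In particular, (U ⊕ Hom(U,V), ω') is irreducible. -/
/-- For the standard `V`-symplectic space `U ⊕ Hom(U,V)` and any linear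
map `f : V → V'` with nontrivial kernel, the composite `f ∘ ω'` is degenerate;
in particular `U ⊕ Hom(U,V)` is irreducible. -/
theorem standard_polysymplectic_irreducible
    {U V V' : Type*} [AddCommGroup U] [Module ℝ U] [AddCommGroup V] [Module ℝ V]
    [AddCommGroup V'] [Module ℝ V'] [Nontrivial U] [Nontrivial V]
    (ω' : (U × (U →ₗ[ℝ] V)) →ₗ[ℝ] (U × (U →ₗ[ℝ] V)) →ₗ[ℝ] V)
    (hω : ∀ p q : U × (U →ₗ[ℝ] V), ω' p q = q.2 p.1 - p.2 q.1)
    (f : V →ₗ[ℝ] V') (hf : ∃ v : V, v ≠ 0 ∧ f v = 0) :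
    ∃ p : U × (U →ₗ[ℝ] V), p ≠ 0 ∧ ∀ q, f (ω' p q) = 0 := by
  obtain ⟨v, hv, hfv⟩ := hf
  obtain ⟨u0, hu0⟩ := exists_ne (0 : U)
  -- a linear functional not vanishing at u0
  have : ¬ ∀ φ : Module.Dual ℝ U, φ u0 = 0 := by
    rw [Module.forall_dual_apply_eq_zero_iff]; exact hu0
  push_neg at this
  obtain ⟨φ0, hφ0⟩ := this
  refine ⟨(0, (φ0.smulRight v : U →ₗ[ℝ] V)), ?_, ?_⟩
  · intro h
    rw [Prod.ext_iff] at h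
    have h2 := congrArg (fun g : U →ₗ[ℝ] V => g u0) h.2
    simp only [LinearMap.smulRight_apply, Prod.snd_zero, LinearMap.zero_apply,
      smul_eq_zero] at h2
    rcases h2 with h2 | h2
    · exact hφ0 h2
    · exact hv h2
  · intro q
    rw [hω]
    simp [hfv]
end

section
/- Let U, V have positive dimension and W = U ⊕ Hom(U,V) with ω(u+φ,u'+φ') = φ'(u) − φ(u'). For a subspace B ⊆ Hom(U,V), the subspace U ⊕ B ⊆ W satisfies (U ⊕ B)^ω ∩ (U ⊕ B) = B⁰, where B⁰ = {u ∈ U : φ(u) = 0 for all φ ∈ B}. In particular, U ⊕ B is a polysymplectic subspace if and only if B⁰ = 0. -/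
/-- The polysymplectic orthogonal `A^ω = {v | ω(a,v) = 0 for all a ∈ A}`. -/
def polyOrth {U V : Type*} [AddCommGroup U] [Module ℝ U] [AddCommGroup V] [Module ℝ V]
    (ω : U →ₗ[ℝ] U →ₗ[ℝ] V) (A : Submodule ℝ U) : Submodule ℝ U where
  carrier := {v | ∀ a ∈ A, ω a v = 0}
  add_mem' := by
    intro x y hx hy a ha
    simp [map_add, hx a ha, hy a ha]
  zero_mem' := by
    intro a ha
    simp
  smul_mem' := by
    intro c x hx a ha
    simp [map_smul, hx a ha]

/-- in `W = U ⊕ Hom(U,V)`, for a subspace `B ⊆ Hom(U,V)` one has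
`(U ⊕ B)^ω ∩ (U ⊕ B) = B⁰`; in particular `U ⊕ B` is polysymplectic iff `B⁰ = 0`. -/
theorem polyOrth_prod_top_inf
    {U V : Type*} [AddCommGroup U] [Module ℝ U] [AddCommGroup V] [Module ℝ V]
    [Nontrivial U] [Nontrivial V]
    (ω : (U × (U →ₗ[ℝ] V)) →ₗ[ℝ] (U × (U →ₗ[ℝ] V)) →ₗ[ℝ] V)
    (hω : ∀ p q : U × (U →ₗ[ℝ] V), ω p q = q.2 p.1 - p.2 q.1)
    (B : Submodule ℝ (U →ₗ[ℝ] V)) :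
    polyOrth ω ((⊤ : Submodule ℝ U).prod B) ⊓ (⊤ : Submodule ℝ U).prod B
        = Submodule.map (LinearMap.inl ℝ U (U →ₗ[ℝ] V)) (⨅ φ ∈ B, LinearMap.ker φ) ∧
    (polyOrth ω ((⊤ : Submodule ℝ U).prod B) ⊓ (⊤ : Submodule ℝ U).prod B = ⊥ ↔
        (⨅ φ ∈ B, LinearMap.ker φ) = (⊥ : Submodule ℝ U)) := by
  have hmain : polyOrth ω ((⊤ : Submodule ℝ U).prod B) ⊓ (⊤ : Submodule ℝ U).prod B
      = Submodule.map (LinearMap.inl ℝ U (U →ₗ[ℝ] V)) (⨅ φ ∈ B, LinearMap.ker φ) := by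
    ext ⟨u, φ⟩
    simp only [Submodule.mem_inf, Submodule.mem_map, Submodule.mem_iInf,
      LinearMap.mem_ker, Submodule.mem_prod, Submodule.mem_top, true_and]
    constructor
    · rintro ⟨horth, hφB⟩
      have hφ0 : φ = 0 := by
        ext a
        have := horth (a, 0) (by simp)
        simpa [hω] using this
      refine ⟨u, fun ψ hψ => ?_, by simp [hφ0]⟩
      have := horth (0, ψ) (by simpa)
      simpa [hω, hφ0] using this
    · rintro ⟨x, hx, hxy⟩
      have hu : x = u := congrArg Prod.fst hxy
      have hφ : φ = 0 := (congrArg Prod.snd hxy).symm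
      subst hu
      refine ⟨?_, by simp [hφ]⟩
      rintro ⟨a, ψ⟩ ⟨-, hψ⟩
      simp [hω, hφ, hx ψ hψ]
  refine ⟨hmain, ?_⟩
  rw [hmain]
  constructor
  · intro h
    rw [eq_bot_iff]
    intro u hu
    have : (LinearMap.inl ℝ U (U →ₗ[ℝ] V)) u ∈ (⊥ : Submodule ℝ (U × (U →ₗ[ℝ] V))) :=
      h ▸ Submodule.mem_map_of_mem hu
    simpa using congrArg Prod.fst (Submodule.mem_bot _ |>.mp this)
  · intro h
    rw [h, Submodule.map_bot]
end

section
/- Let (U, ω) be a V-symplectic vector space and A ⊆ U a subspace; set B = A ∩ A^ω. Then ω descends to a well-defined V-valued alternating bilinear form ω_A on the quotient A^ω / B, and the kernel of ω_A (elements pairing to zero with everything) is exactly (A^{ωω} ∩ A^ω)/B. In particular, if A is isotropic and A^{ωω} = A, then ω_A is nondegenerate on A^ω/A. -/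
/-- linear polysymplectic reduction: `ω` descends to `A^ω/(A ∩ A^ω)` with
kernel `(A^{ωω} ∩ A^ω)/(A ∩ A^ω)`; nondegenerate when `A` is isotropic and `A^{ωω} = A`. -/
theorem linear_polysymplectic_reduction
    {U V : Type*} [AddCommGroup U] [Module ℝ U] [AddCommGroup V] [Module ℝ V]
    (ω : U →ₗ[ℝ] U →ₗ[ℝ] V)
    (halt : ∀ u, ω u u = 0)
    (hnd : ∀ u, (∀ u', ω u u' = 0) → u = 0)
    (A : Submodule ℝ U) :
    ∃ ωA : (↥(polyOrth ω A) ⧸ Submodule.comap (polyOrth ω A).subtype (A ⊓ polyOrth ω A))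
        →ₗ[ℝ] (↥(polyOrth ω A) ⧸ Submodule.comap (polyOrth ω A).subtype (A ⊓ polyOrth ω A))
        →ₗ[ℝ] V,
      (∀ u u' : polyOrth ω A,
        ωA (Submodule.Quotient.mk u) (Submodule.Quotient.mk u') = ω u u') ∧
      (∀ u : polyOrth ω A,
        (∀ q, ωA (Submodule.Quotient.mk u) q = 0) ↔
          (u : U) ∈ polyOrth ω (polyOrth ω A) ⊓ polyOrth ω A) ∧
      (A ≤ polyOrth ω A → polyOrth ω (polyOrth ω A) = A →
        ∀ p, (∀ q, ωA p q = 0) → p = 0) := by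
  classical
  have skew : ∀ u v : U, ω u v = - ω v u := by
    intro u v
    have h := halt (u + v)
    simp only [map_add, LinearMap.add_apply, halt u, halt v, zero_add, add_zero] at h
    exact eq_neg_of_add_eq_zero_right h
  set P := polyOrth ω A with hP
  set B := Submodule.comap P.subtype (A ⊓ P) with hB
  -- restricted bilinear form
  set g : ↥P →ₗ[ℝ] ↥P →ₗ[ℝ] V := ((ω.domRestrict P).compl₂ P.subtype) with hg
  have hgapp : ∀ u u' : ↥P, g u u' = ω u u' := fun u u' => rfl
  -- vanishing on B in second argument
  have hvan2 : ∀ (u : ↥P) (b : ↥P), b ∈ B → g u b = 0 := by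
    intro u b hb
    rw [hgapp, skew]
    have hbA : (b : U) ∈ A := hb.1
    have huP : (u : U) ∈ P := u.2
    rw [huP b hbA, neg_zero]
  -- vanishing on B in first argument
  have hvan1 : ∀ (b : ↥P) (u : ↥P), b ∈ B → g b u = 0 := by
    intro b u hb
    rw [hgapp]
    exact u.2 b hb.1
  -- lift in second argument
  have hle : ∀ u : ↥P, B ≤ LinearMap.ker (g u) := by
    intro u b hb
    exact hvan2 u b hb
  set h : ↥P →ₗ[ℝ] (↥P ⧸ B) →ₗ[ℝ] V :=
    { toFun := fun u => Submodule.liftQ B (g u) (hle u)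
      map_add' := by
        intro x y
        apply Submodule.linearMap_qext
        ext b
        simp
      map_smul' := by
        intro c x
        apply Submodule.linearMap_qext
        ext b
        simp } with hh
  have hhapp : ∀ u u' : ↥P, h u (Submodule.Quotient.mk u') = ω u u' := fun u u' => rfl
  have hle2 : B ≤ LinearMap.ker h := by
    intro b hb
    apply Submodule.linearMap_qext
    ext u
    exact hvan1 b u hb
  refine ⟨Submodule.liftQ B h hle2, ?_, ?_, ?_⟩
  · intro u u'
    rfl
  · intro u
    constructor
    · intro hq
      refine ⟨?_, u.2⟩
      intro a ha
      have := hq (Submodule.Quotient.mk ⟨a, ha⟩)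
      have h1 : ω (u : U) a = 0 := this
      rw [skew] at h1
      exact (neg_eq_zero.mp h1)
    · rintro ⟨h1, _⟩ q
      induction q using Submodule.Quotient.induction_on with
      | H u' =>
        show ω (u : U) u' = 0
        rw [skew]
        rw [h1 u' u'.2, neg_zero]
  · intro hiso hAωω p hp
    induction p using Submodule.Quotient.induction_on with
    | H u =>
      have hmem : (u : U) ∈ polyOrth ω (polyOrth ω A) ⊓ polyOrth ω A := by
        constructor
        · intro a ha
          have := hp (Submodule.Quotient.mk ⟨a, ha⟩)
          have h1 : ω (u : U) a = 0 := this
          rw [skew] at h1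
          exact (neg_eq_zero.mp h1)
        · exact u.2
      rw [hAωω] at hmem
      exact (Submodule.Quotient.mk_eq_zero _).mpr ⟨hmem.1, u.2⟩
end
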